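/- arXiv:1912.11933 — 7 statements merged into one kernel-verified Lean document; each statement's English description precedes it below -/
import Mathlib

section
/- For the ghost-penalty stabilized scheme, there exist no parameters η1, η2 ∈ ℝ making all entries of the system matrix B_GP nonnegative when α < λ. Specifically, nonnegativity of the superdiagonal entries −τη1 and −τη2 forces η1 ≤ 0 and η2 ≤ 0, while nonnegativity of the diagonal entry αh − τ + τη1 + τη2 requires τ(η1 + η2) ≥ τ − αh > 0, a contradiction. -/
/-- Ghost-penalty stabilization cannot give a monotone scheme on the small cut cell:
there are no parameters `η1, η2` making the superdiagonal entries `−τη1`, `−τη2` and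
the diagonal entry `α h − τ + τ η1 + τ η2` all nonnegative when `α < λ = τ/h`. -/
theorem ghost_penalty_not_monotone (h τ α lam : ℝ)
    (hh : 0 < h) (hτ : 0 < τ) (hα0 : 0 < α) (hα : α ≤ 1/2)
    (hlam : lam = τ / h) (hcut : α < lam) :
    ¬ ∃ η1 η2 : ℝ, 0 ≤ -τ * η1 ∧ 0 ≤ -τ * η2 ∧
      0 ≤ α * h - τ + τ * η1 + τ * η2 := by
  rintro ⟨η1, η2, h1, h2, h3⟩
  have hαh : α * h < τ := by
    rw [hlam, lt_div_iff₀ hh] at hcut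
    linarith
  nlinarith
end

section
/- For the DoD-stabilized scheme with parameter η and α < λ ≤ 1/2, all entries of the system matrix B_DoD are nonnegative if and only if η ∈ [1 − α/λ, 1]. In particular the three conditions αh − τ(1−η) ≥ 0, τη ≥ 0, and τ(1−η) ≥ 0 are equivalent to 1 − α/λ ≤ η ≤ 1 (noting τη ≥ 0 is implied since 1 − α/λ > 0). -/
/-! The diagonal entry `α h − τ(1−η)` of the cut cell `k₁` equals `τ (η − (1 − α/λ))`, so it is
nonnegative exactly when `η ≥ 1 − α/λ`; the entry `τ(1−η)` is nonnegative exactly when `η ≤ 1`.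
Since `α < λ`, the lower bound `1 − α/λ` is positive, which makes the entry `τη` nonnegative
for free. -/

lemma dod_diagonal_nonneg_iff {h lam α η : ℝ} (hh : 0 < h) (hlam : 0 < lam) :
    0 ≤ α * h - lam * h * (1 - η) ↔ 1 - α / lam ≤ η := by
  have h_factor : α * h - lam * h * (1 - η) = lam * h * (η - (1 - α / lam)) := by
    field_simp
    ring
  rw [h_factor, mul_nonneg_iff_of_pos_left (mul_pos hlam hh), sub_nonneg]

lemma one_sub_div_pos_of_lt {α lam : ℝ} (hlam : 0 < lam) (hα : α < lam) : 0 < 1 - α / lam :=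
  sub_pos.2 ((div_lt_one hlam).2 hα)

theorem dod_monotone_iff_general (h τ α lam η : ℝ)
    (hh : 0 < h) (hτ : 0 < τ) (hlam : lam = τ / h)
    (hcut : α < lam) :
    (0 ≤ α * h - τ * (1 - η) ∧ 0 ≤ τ * η ∧ 0 ≤ τ * (1 - η)) ↔
      (1 - α / lam ≤ η ∧ η ≤ 1) := by
  have hlam0 : 0 < lam := hlam ▸ div_pos hτ hh
  have hτ_eq : τ = lam * h := by rw [hlam, div_mul_cancel₀ τ hh.ne']
  have h_diag : 0 ≤ α * h - τ * (1 - η) ↔ 1 - α / lam ≤ η := by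
    rw [hτ_eq]
    exact dod_diagonal_nonneg_iff hh hlam0
  have h_upper : 0 ≤ τ * (1 - η) ↔ η ≤ 1 := by
    rw [mul_nonneg_iff_of_pos_left hτ, sub_nonneg]
  rw [h_diag, h_upper]
  constructor
  · rintro ⟨h_lower, -, h_le_one⟩
    exact ⟨h_lower, h_le_one⟩
  · rintro ⟨h_lower, h_le_one⟩
    have hη : 0 ≤ η := (one_sub_div_pos_of_lt hlam0 hcut).le.trans h_lower
    exact ⟨h_lower, mul_nonneg hτ.le hη, h_le_one⟩

/-- DoD stabilization: all entries of the system matrix `B_DoD` are nonnegative iff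
`η ∈ [1 − α/λ, 1]`, where the nontrivial entries give the three conditions
`α h − τ(1−η) ≥ 0`, `τ η ≥ 0`, `τ(1−η) ≥ 0`. -/
theorem dod_monotone_iff (h τ α lam η : ℝ)
    (hh : 0 < h) (hτ : 0 < τ) (hlam : lam = τ / h)
    (hα0 : 0 < α) (hcut : α < lam) (hlam2 : lam ≤ 1/2) :
    (0 ≤ α * h - τ * (1 - η) ∧ 0 ≤ τ * η ∧ 0 ≤ τ * (1 - η)) ↔
      (1 - α / lam ≤ η ∧ η ≤ 1) :=
  dod_monotone_iff_general h τ α lam η hh hτ hlam hcut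
end

section
/- For the DoD-stabilized explicit Euler scheme with η ∈ [1 − α/λ, 1] and 0 < α < λ ≤ 1/2, the scheme is monotone, and consequently satisfies a discrete maximum principle: min_j u^0_j ≤ u^n_j ≤ max_j u^0_j for all cells j and all times n. -/
/-- The DoD-stabilized explicit Euler scheme with `η ∈ [1−α/λ, 1]`, `0 < α < λ ≤ 1/2`,
on a periodic mesh with small cut cell `k1` and neighbor `k2 = k1 + 1`, satisfies the
discrete maximum principle `min_j u^0_j ≤ u^n_j ≤ max_j u^0_j` for all `n, j`. -/
theorem dod_max_principle (N : ℕ) [NeZero N] (hN : 3 ≤ N)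
    (α lam η : ℝ) (hα0 : 0 < α) (hcut : α < lam) (hlam : lam ≤ 1/2)
    (hη1 : 1 - α / lam ≤ η) (hη2 : η ≤ 1)
    (k1 : ZMod N) (u : ℕ → ZMod N → ℝ)
    (hstd : ∀ n, ∀ j : ZMod N, j ≠ k1 → j ≠ k1 + 1 →
      u (n+1) j = u n j - lam * (u n j - u n (j - 1)))
    (hk1 : ∀ n, u (n+1) k1 =
      u n k1 - (lam / α) * (1 - η) * (u n k1 - u n (k1 - 1)))
    (hk2 : ∀ n, u (n+1) (k1 + 1) =
      u n (k1 + 1) - (lam / (1 - α)) * (u n (k1 + 1) - u n k1)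
        - (lam / (1 - α)) * η * (u n k1 - u n (k1 - 1))) :
    ∀ n, ∀ j : ZMod N,
      Finset.univ.inf' ⟨k1, Finset.mem_univ k1⟩ (u 0) ≤ u n j ∧
      u n j ≤ Finset.univ.sup' ⟨k1, Finset.mem_univ k1⟩ (u 0) := by
  set m := Finset.univ.inf' ⟨k1, Finset.mem_univ k1⟩ (u 0) with hm
  set M := Finset.univ.sup' ⟨k1, Finset.mem_univ k1⟩ (u 0) with hM
  have hlam0 : 0 < lam := hα0.trans hcut
  have hα2 : α < 1/2 := hcut.trans_le hlam
  have h1α : (0:ℝ) < 1 - α := by linarith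
  have hη0 : 0 ≤ η := by
    have : α / lam < 1 := (div_lt_one hlam0).2 hcut
    linarith
  -- coefficient for k1
  have hc0 : 0 ≤ (lam / α) * (1 - η) := by
    have := div_pos hlam0 hα0
    nlinarith
  have hc1 : (lam / α) * (1 - η) ≤ 1 := by
    rw [div_mul_eq_mul_div, div_le_one hα0]
    have h := (le_div_iff₀ hlam0).1 (show 1 - η ≤ α / lam by linarith)
    nlinarith
  -- coefficient for k2
  have ha0 : 0 ≤ lam / (1 - α) := le_of_lt (div_pos hlam0 h1α)
  have ha1 : lam / (1 - α) ≤ 1 := by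
    rw [div_le_one h1α]; linarith
  intro n
  induction n with
  | zero =>
    intro j
    exact ⟨Finset.inf'_le _ (Finset.mem_univ j), Finset.le_sup' _ (Finset.mem_univ j)⟩
  | succ n ih =>
    intro j
    obtain ⟨h1l, h1r⟩ := ih k1
    obtain ⟨h0l, h0r⟩ := ih (k1 - 1)
    obtain ⟨h2l, h2r⟩ := ih (k1 + 1)
    obtain ⟨hjl, hjr⟩ := ih j
    obtain ⟨hpl, hpr⟩ := ih (j - 1)
    by_cases hj : j = k1
    · subst hj
      rw [hk1 n]
      constructor
      · linarith [mul_nonneg hc0 (sub_nonneg.2 h0l),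
          mul_nonneg (sub_nonneg.2 hc1) (sub_nonneg.2 h1l)]
      · linarith [mul_nonneg hc0 (sub_nonneg.2 h0r),
          mul_nonneg (sub_nonneg.2 hc1) (sub_nonneg.2 h1r)]
    by_cases hj2 : j = k1 + 1
    · subst hj2
      rw [hk2 n]
      have hb0 : 0 ≤ (lam / (1 - α)) * η := mul_nonneg ha0 hη0
      have hab : 0 ≤ (lam / (1 - α)) * (1 - η) := mul_nonneg ha0 (by linarith)
      constructor
      · linarith [mul_nonneg (sub_nonneg.2 ha1) (sub_nonneg.2 h2l),
          mul_nonneg hab (sub_nonneg.2 h1l),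
          mul_nonneg hb0 (sub_nonneg.2 h0l)]
      · linarith [mul_nonneg (sub_nonneg.2 ha1) (sub_nonneg.2 h2r),
          mul_nonneg hab (sub_nonneg.2 h1r),
          mul_nonneg hb0 (sub_nonneg.2 h0r)]
    · rw [hstd n j hj hj2]
      constructor
      · linarith [mul_nonneg hlam0.le (sub_nonneg.2 hpl),
          mul_nonneg (by linarith : (0:ℝ) ≤ 1 - lam) (sub_nonneg.2 hjl)]
      · linarith [mul_nonneg hlam0.le (sub_nonneg.2 hpr),
          mul_nonneg (by linarith : (0:ℝ) ≤ 1 - lam) (sub_nonneg.2 hjr)]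
end

section
/- With η = 1 − α/λ, the DoD-stabilized update on the cut cells equals the exact-advection-and-average update: if u^n is piecewise constant on the mesh and is exactly advected by distance βΔt = λh and then averaged over each cell, then (for λ ≤ 1/2 and α < λ) the cell averages on k1 and k2 are exactly u^n_{k−1} and (1 − λ/(1−α)) u^n_{k2} + (α/(1−α)) u^n_{k1} + ((λ−α)/(1−α)) u^n_{k−1}, respectively. -/
open intervalIntegral
open MeasureTheory Set

section StepFunction

variable {g : ℝ → ℝ} {a b c d u v w : ℝ}

theorem intervalIntegrable_of_eqOn_Ico (hab : a ≤ b) (hg : EqOn g (fun _ => u) (Ico a b)) :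
    IntervalIntegrable g volume a b :=
  (intervalIntegrable_iff_integrableOn_Ico_of_le hab).2 <|
    (integrableOn_const measure_Ico_lt_top.ne).congr_fun hg.symm measurableSet_Ico

theorem integral_of_eqOn_Ico (hab : a ≤ b) (hg : EqOn g (fun _ => u) (Ico a b)) :
    ∫ y in a..b, g y = (b - a) * u := by
  rw [integral_of_le hab, integral_Ioc_eq_integral_Ioo, ← integral_Ico_eq_integral_Ioo,
    setIntegral_congr_fun measurableSet_Ico hg, setIntegral_const, Real.volume_real_Ico_of_le hab,
    smul_eq_mul]

theorem integral_of_eqOn_Ico_three (hab : a ≤ b) (hbc : b ≤ c) (hcd : c ≤ d)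
    (hu : EqOn g (fun _ => u) (Ico a b)) (hv : EqOn g (fun _ => v) (Ico b c))
    (hw : EqOn g (fun _ => w) (Ico c d)) :
    ∫ y in a..d, g y = (b - a) * u + (c - b) * v + (d - c) * w := by
  have hab' := intervalIntegrable_of_eqOn_Ico hab hu
  have hbc' := intervalIntegrable_of_eqOn_Ico hbc hv
  rw [← integral_add_adjacent_intervals (hab'.trans hbc') (intervalIntegrable_of_eqOn_Ico hcd hw),
    ← integral_add_adjacent_intervals hab' hbc', integral_of_eqOn_Ico hab hu,
    integral_of_eqOn_Ico hbc hv, integral_of_eqOn_Ico hcd hw]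

end StepFunction

/-- With `η = 1 − α/λ` the DoD update equals exact advection followed by averaging:
if `f` is piecewise constant with values `ukm1`, `uk1`, `uk2` on the cells
`[x−h, x)`, `[x, x+αh)`, `[x+αh, x+h)`, then the averages of `f(· − λh)` over the two
cut cells are `ukm1` and `(1 − λ/(1−α)) uk2 + (α/(1−α)) uk1 + ((λ−α)/(1−α)) ukm1`. -/
theorem dod_exact_advection_average (h α lam x ukm1 uk1 uk2 : ℝ) (f : ℝ → ℝ)
    (hh : 0 < h) (hα0 : 0 < α) (hcut : α < lam) (hlam : lam ≤ 1/2)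
    (hfm : ∀ y ∈ Set.Ico (x - h) x, f y = ukm1)
    (hf1 : ∀ y ∈ Set.Ico x (x + α * h), f y = uk1)
    (hf2 : ∀ y ∈ Set.Ico (x + α * h) (x + h), f y = uk2) :
    (1 / (α * h)) * ∫ y in x..(x + α * h), f (y - lam * h) = ukm1 ∧
    (1 / ((1 - α) * h)) * ∫ y in (x + α * h)..(x + h), f (y - lam * h)
      = (1 - lam / (1 - α)) * uk2 + (α / (1 - α)) * uk1
        + ((lam - α) / (1 - α)) * ukm1 := by
  have hαh : 0 < α * h := mul_pos hα0 hh
  have hlamh : α * h < lam * h := mul_lt_mul_of_pos_right hcut hh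
  have hlam1 : lam * h ≤ h := by nlinarith
  have hsum : (α + lam) * h ≤ h := by nlinarith
  have hα1 : 1 - α ≠ 0 := by linarith
  constructor
  · rw [integral_comp_sub_right, integral_of_eqOn_Ico (by linarith)
      (EqOn.mono (Ico_subset_Ico (by linarith) (by linarith)) hfm)]
    field_simp
    ring
  · rw [integral_comp_sub_right, integral_of_eqOn_Ico_three (b := x) (c := x + α * h)
      (by linarith) (by linarith) (by linarith)
      (EqOn.mono (Ico_subset_Ico (by linarith) le_rfl) hfm) hf1
      (EqOn.mono (Ico_subset_Ico le_rfl (by linarith)) hf2)]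
    field_simp
    ring
end

section
/- For any η ∈ [1 − α/λ, 1], the coefficients in the DoD-stabilized update formula for each cell are nonnegative and sum to 1; hence u^{n+1}_j is a convex combination of values of u^n, and the scheme satisfies a local maximum principle: min(u^n_{k−1}, u^n_{k1}, u^n_{k2}) ≤ u^{n+1}_{k2} ≤ max(u^n_{k−1}, u^n_{k1}, u^n_{k2}) and min(u^n_{k−1}, u^n_{k1}) ≤ u^{n+1}_{k1} ≤ max(u^n_{k−1}, u^n_{k1}). -/
lemma convex2 (c1 c2 x y : ℝ) (h1 : 0 ≤ c1) (h2 : 0 ≤ c2) (hs : c1 + c2 = 1) :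
    min y x ≤ c1 * x + c2 * y ∧ c1 * x + c2 * y ≤ max y x := by
  have e1 : c1 * min y x + c2 * min y x = min y x := by
    calc c1 * min y x + c2 * min y x = (c1 + c2) * min y x := by ring
    _ = min y x := by rw [hs, one_mul]
  have e2 : c1 * max y x + c2 * max y x = max y x := by
    calc c1 * max y x + c2 * max y x = (c1 + c2) * max y x := by ring
    _ = max y x := by rw [hs, one_mul]
  constructor
  · have a1 := mul_le_mul_of_nonneg_left (min_le_right y x) h1
    have a2 := mul_le_mul_of_nonneg_left (min_le_left y x) h2
    linarith
  · have a1 := mul_le_mul_of_nonneg_left (le_max_right y x) h1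
    have a2 := mul_le_mul_of_nonneg_left (le_max_left y x) h2
    linarith

lemma convex3 (c1 c2 c3 x y z : ℝ) (h1 : 0 ≤ c1) (h2 : 0 ≤ c2) (h3 : 0 ≤ c3)
    (hs : c1 + c2 + c3 = 1) :
    min z (min y x) ≤ c1 * x + c2 * y + c3 * z ∧
      c1 * x + c2 * y + c3 * z ≤ max z (max y x) := by
  set m := min z (min y x) with hm
  set M := max z (max y x) with hM
  have hm1 : m ≤ x := le_trans (min_le_right _ _) (min_le_right _ _)
  have hm2 : m ≤ y := le_trans (min_le_right _ _) (min_le_left _ _)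
  have hm3 : m ≤ z := min_le_left _ _
  have hM1 : x ≤ M := le_trans (le_max_right _ _) (le_max_right _ _)
  have hM2 : y ≤ M := le_trans (le_max_left _ _) (le_max_right _ _)
  have hM3 : z ≤ M := le_max_left _ _
  have e1 : c1 * m + c2 * m + c3 * m = m := by
    calc c1 * m + c2 * m + c3 * m = (c1 + c2 + c3) * m := by ring
    _ = m := by rw [hs, one_mul]
  have e2 : c1 * M + c2 * M + c3 * M = M := by
    calc c1 * M + c2 * M + c3 * M = (c1 + c2 + c3) * M := by ring
    _ = M := by rw [hs, one_mul]
  constructor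
  · have a1 := mul_le_mul_of_nonneg_left hm1 h1
    have a2 := mul_le_mul_of_nonneg_left hm2 h2
    have a3 := mul_le_mul_of_nonneg_left hm3 h3
    linarith
  · have a1 := mul_le_mul_of_nonneg_left hM1 h1
    have a2 := mul_le_mul_of_nonneg_left hM2 h2
    have a3 := mul_le_mul_of_nonneg_left hM3 h3
    linarith

/-- For `η ∈ [1−α/λ, 1]` with `0 < α < λ ≤ 1/2`, the DoD update coefficients are
nonnegative and sum to 1 (convex combinations), giving the local maximum principle on
the cut cells. -/
theorem dod_local_max_principle (α lam η ukm1 uk1 uk2 : ℝ)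
    (hα0 : 0 < α) (hcut : α < lam) (hlam : lam ≤ 1/2)
    (hη1 : 1 - α / lam ≤ η) (hη2 : η ≤ 1) :
    (0 ≤ 1 - (lam / α) * (1 - η) ∧ 0 ≤ (lam / α) * (1 - η) ∧
      (1 - (lam / α) * (1 - η)) + (lam / α) * (1 - η) = 1) ∧
    (0 ≤ 1 - lam / (1 - α) ∧ 0 ≤ (lam / (1 - α)) * (1 - η) ∧
      0 ≤ (lam / (1 - α)) * η ∧
      (1 - lam / (1 - α)) + (lam / (1 - α)) * (1 - η) + (lam / (1 - α)) * η = 1) ∧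
    (min ukm1 uk1 ≤ (1 - (lam / α) * (1 - η)) * uk1 + (lam / α) * (1 - η) * ukm1 ∧
      (1 - (lam / α) * (1 - η)) * uk1 + (lam / α) * (1 - η) * ukm1 ≤ max ukm1 uk1) ∧
    (min ukm1 (min uk1 uk2)
        ≤ (1 - lam / (1 - α)) * uk2 + (lam / (1 - α)) * (1 - η) * uk1
          + (lam / (1 - α)) * η * ukm1 ∧
      (1 - lam / (1 - α)) * uk2 + (lam / (1 - α)) * (1 - η) * uk1
          + (lam / (1 - α)) * η * ukm1 ≤ max ukm1 (max uk1 uk2)) := by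
  have hlam0 : 0 < lam := hα0.trans hcut
  have hηnn : 0 ≤ η := by
    have : α / lam < 1 := (div_lt_one hlam0).mpr hcut
    linarith
  have h1α : 0 < 1 - α := by linarith
  have hkey : (1 - η) * lam ≤ α := by
    have := (le_div_iff₀ hlam0).mp (show 1 - η ≤ α / lam by linarith)
    linarith
  have ha2 : 0 ≤ (lam / α) * (1 - η) :=
    mul_nonneg (by positivity) (by linarith)
  have ha1 : (lam / α) * (1 - η) ≤ 1 := by
    rw [div_mul_eq_mul_div, div_le_one hα0]; nlinarith
  have hb1 : lam / (1 - α) ≤ 1 := (div_le_one h1α).mpr (by linarith)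
  have hb0 : 0 ≤ lam / (1 - α) := by positivity
  have hb2 : 0 ≤ (lam / (1 - α)) * (1 - η) := mul_nonneg hb0 (by linarith)
  have hb3 : 0 ≤ (lam / (1 - α)) * η := mul_nonneg hb0 hηnn
  refine ⟨⟨by linarith, ha2, by ring⟩, ⟨by linarith, hb2, hb3, by ring⟩, ?_, ?_⟩
  · have h := convex2 (1 - (lam / α) * (1 - η)) ((lam / α) * (1 - η)) uk1 ukm1
      (by linarith) ha2 (by ring)
    exact ⟨h.1, h.2⟩
  · have h := convex3 (1 - lam / (1 - α)) ((lam / (1 - α)) * (1 - η)) ((lam / (1 - α)) * η)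
      uk2 uk1 ukm1 (by linarith) hb2 hb3 (by ring)
    exact ⟨h.1, h.2⟩
end

section
/- For the DoD-stabilized scheme with η ∈ [1 − α/λ, 1] and 0 < α < λ ≤ 1/2, the scheme conserves mass: Σ_j |I_j| u^{n+1}_j = Σ_j |I_j| u^n_j, where |I_j| is the length of cell j (h for standard cells, αh and (1−α)h for the cut cells), under periodic boundary conditions. -/
/-!
Multiplying each update by its cell length puts the scheme in conservative form: the change of
mass in cell `j` is the difference of the upwind fluxes `λ h u_{j-1}` and `λ h u_j`, plus the
stabilization term `λ h η [u]`, which enters the cut cell `k₁` and leaves its neighbour `k₁ + 1`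
with opposite signs. Summed over the periodic mesh, the fluxes telescope and the stabilization
term cancels.
-/

open Finset

lemma sum_sub_comp_sub_eq_zero {G M : Type*} [AddGroup G] [Fintype G] [AddCommGroup M]
    (f : G → M) (a : G) : ∑ j, (f j - f (j - a)) = 0 := by
  rw [sum_sub_distrib, sub_eq_zero]
  exact ((Equiv.subRight a).sum_comp f).symm

lemma sum_eq_of_eq_sub_flux_add_transfer {G M : Type*} [AddGroup G] [Fintype G] [DecidableEq G]
    [AddCommGroup M] {m m' F : G → M} {a p q : G} {c : M}
    (hm : ∀ j, m' j = m j - (F j - F (j - a)) + (Pi.single p c - Pi.single q c : G → M) j) :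
    ∑ j, m' j = ∑ j, m j := by
  simp only [hm, sum_add_distrib, Pi.sub_apply, sum_sub_distrib _ (Pi.single q c),
    Fintype.sum_pi_single', sub_self, add_zero]
  rw [sum_sub_distrib, sum_sub_comp_sub_eq_zero, sub_zero]

lemma ZMod.self_ne_add_one {N : ℕ} (hN : 2 ≤ N) (k : ZMod N) : k ≠ k + 1 := by
  have : Fact (1 < N) := ⟨hN⟩
  simp

section DoDScheme

variable {N : ℕ} (h α : ℝ) (k1 : ZMod N)

def cellLength (j : ZMod N) : ℝ :=
  if j = k1 then α * h else if j = k1 + 1 then (1 - α) * h else h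

variable {h α k1} {lam η : ℝ}

lemma cellLength_mul_step_eq_flux_form (hα : α ≠ 0) (hα1 : 1 - α ≠ 0) (hk : k1 ≠ k1 + 1)
    {v v' : ZMod N → ℝ}
    (hstd : ∀ j, j ≠ k1 → j ≠ k1 + 1 → v' j = v j - lam * (v j - v (j - 1)))
    (hk1 : v' k1 = v k1 - (lam / α) * (1 - η) * (v k1 - v (k1 - 1)))
    (hk2 : v' (k1 + 1) = v (k1 + 1) - (lam / (1 - α)) * (v (k1 + 1) - v k1)
        - (lam / (1 - α)) * η * (v k1 - v (k1 - 1)))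
    (j : ZMod N) :
    cellLength h α k1 j * v' j
      = cellLength h α k1 j * v j - (lam * h * v j - lam * h * v (j - 1))
        + (Pi.single k1 (lam * h * η * (v k1 - v (k1 - 1)))
          - Pi.single (k1 + 1) (lam * h * η * (v k1 - v (k1 - 1))) : ZMod N → ℝ) j := by
  simp only [cellLength, Pi.sub_apply]
  by_cases hj1 : j = k1
  · subst hj1
    simp only [if_pos, if_neg hk, Pi.single_eq_same, Pi.single_eq_of_ne hk, hk1]
    field_simp
    ring
  by_cases hj2 : j = k1 + 1
  · subst hj2
    simp only [if_pos, if_neg hk.symm, Pi.single_eq_same, Pi.single_eq_of_ne hk.symm, hk2,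
      add_sub_cancel_right]
    field_simp
    ring
  · simp only [if_neg hj1, if_neg hj2, Pi.single_eq_of_ne hj1, Pi.single_eq_of_ne hj2,
      hstd j hj1 hj2]
    ring

end DoDScheme

theorem dod_mass_conservation_general (N : ℕ) [NeZero N] (hN : 3 ≤ N)
    (h α lam η : ℝ)
    (hα0 : 0 < α) (hcut : α < lam) (hlam : lam ≤ 1/2)
    (k1 : ZMod N) (u : ℕ → ZMod N → ℝ)
    (hstd : ∀ n, ∀ j : ZMod N, j ≠ k1 → j ≠ k1 + 1 →
      u (n+1) j = u n j - lam * (u n j - u n (j - 1)))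
    (hk1 : ∀ n, u (n+1) k1 =
      u n k1 - (lam / α) * (1 - η) * (u n k1 - u n (k1 - 1)))
    (hk2 : ∀ n, u (n+1) (k1 + 1) =
      u n (k1 + 1) - (lam / (1 - α)) * (u n (k1 + 1) - u n k1)
        - (lam / (1 - α)) * η * (u n k1 - u n (k1 - 1))) :
    ∀ n, (∑ j : ZMod N,
        (if j = k1 then α * h else if j = k1 + 1 then (1 - α) * h else h) * u (n+1) j)
      = ∑ j : ZMod N,
        (if j = k1 then α * h else if j = k1 + 1 then (1 - α) * h else h) * u n j := by
  intro n
  have hα1 : 1 - α ≠ 0 := by linarith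
  exact sum_eq_of_eq_sub_flux_add_transfer
    (cellLength_mul_step_eq_flux_form hα0.ne' hα1 (ZMod.self_ne_add_one (by omega) k1)
      (hstd n) (hk1 n) (hk2 n))

/-- The DoD-stabilized scheme on the periodic cut cell mesh conserves mass:
`Σ_j |I_j| u^{n+1}_j = Σ_j |I_j| u^n_j` with cell lengths `αh` on `k1`,
`(1−α)h` on `k2 = k1+1`, and `h` otherwise. -/
theorem dod_mass_conservation (N : ℕ) [NeZero N] (hN : 3 ≤ N)
    (h α lam η : ℝ) (hh : 0 < h)
    (hα0 : 0 < α) (hcut : α < lam) (hlam : lam ≤ 1/2)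
    (hη1 : 1 - α / lam ≤ η) (hη2 : η ≤ 1)
    (k1 : ZMod N) (u : ℕ → ZMod N → ℝ)
    (hstd : ∀ n, ∀ j : ZMod N, j ≠ k1 → j ≠ k1 + 1 →
      u (n+1) j = u n j - lam * (u n j - u n (j - 1)))
    (hk1 : ∀ n, u (n+1) k1 =
      u n k1 - (lam / α) * (1 - η) * (u n k1 - u n (k1 - 1)))
    (hk2 : ∀ n, u (n+1) (k1 + 1) =
      u n (k1 + 1) - (lam / (1 - α)) * (u n (k1 + 1) - u n k1)
        - (lam / (1 - α)) * η * (u n k1 - u n (k1 - 1))) :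
    ∀ n, (∑ j : ZMod N,
        (if j = k1 then α * h else if j = k1 + 1 then (1 - α) * h else h) * u (n+1) j)
      = ∑ j : ZMod N,
        (if j = k1 then α * h else if j = k1 + 1 then (1 - α) * h else h) * u n j :=
  dod_mass_conservation_general N hN h α lam η hα0 hcut hlam k1 u hstd hk1 hk2
end

section
/- For the DoD-stabilized scheme with η = 1 − α/λ, one time step applied to piecewise constant data equals the L² projection onto piecewise constants of the exactly advected solution; consequently the scheme is exact on cell k1: u^{n+1}_{k1} equals the exact cell average over k1 of u^n(· − βΔt). -/
/-!
Advecting by `s = λh` shifts each cell `[L j, L (j+1))` upstream, so the average of the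
advected data over a cell is a length-weighted mixture of the values of the cells the shifted
cell meets. On a regular cell (length `h`, upstream neighbour of length at least `λh`) the
weights are `λ` and `1 - λ`: the standard upwind update. The small cell `k1` (cell `0`,
length `αh < λh`) is shifted entirely into cell `-1`, and `η = 1 - α/λ` makes the DoD update
on `k1` return exactly `v (-1)`. The shifted cell `k2` (cell `1`) meets cell `-1`, all of
`k1`, and `k2` itself, with weights `(λ - α, α, 1 - λ - α) / (1 - α)`, which the DoD fluxes
on `k2` reproduce.
-/

open intervalIntegral MeasureTheory Set

section PiecewiseConstant

variable {f : ℝ → ℝ} {a m m' b c c' c'' : ℝ}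

theorem intervalIntegrable_of_forall_mem_Ico (hab : a ≤ b)
    (hf : ∀ y ∈ Ico a b, f y = c) : IntervalIntegrable f volume a b :=
  (intervalIntegrable_iff_integrableOn_Ico_of_le hab).2 <|
    (integrableOn_const measure_Ico_lt_top.ne).congr_fun (fun y hy => (hf y hy).symm)
      measurableSet_Ico

theorem integral_eq_of_forall_mem_Ico (hab : a ≤ b) (hf : ∀ y ∈ Ico a b, f y = c) :
    ∫ y in a..b, f y = c * (b - a) := by
  rw [integral_of_le hab, ← integral_Ico_eq_integral_Ioc,
    setIntegral_congr_fun measurableSet_Ico hf, setIntegral_const, Real.volume_real_Ico_of_le hab,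
    smul_eq_mul, mul_comm]

theorem integral_eq_of_forall_mem_Ico₂ (ham : a ≤ m) (hmb : m ≤ b)
    (hf : ∀ y ∈ Ico a m, f y = c) (hf' : ∀ y ∈ Ico m b, f y = c') :
    ∫ y in a..b, f y = c * (m - a) + c' * (b - m) := by
  rw [← integral_add_adjacent_intervals (intervalIntegrable_of_forall_mem_Ico ham hf)
      (intervalIntegrable_of_forall_mem_Ico hmb hf'),
    integral_eq_of_forall_mem_Ico ham hf, integral_eq_of_forall_mem_Ico hmb hf']

theorem integral_eq_of_forall_mem_Ico₃ (ham : a ≤ m) (hmm' : m ≤ m') (hm'b : m' ≤ b)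
    (hf : ∀ y ∈ Ico a m, f y = c) (hf' : ∀ y ∈ Ico m m', f y = c')
    (hf'' : ∀ y ∈ Ico m' b, f y = c'') :
    ∫ y in a..b, f y = c * (m - a) + c' * (m' - m) + c'' * (b - m') := by
  rw [← integral_add_adjacent_intervals (intervalIntegrable_of_forall_mem_Ico ham hf)
      ((intervalIntegrable_of_forall_mem_Ico hmm' hf').trans
        (intervalIntegrable_of_forall_mem_Ico hm'b hf'')),
    integral_eq_of_forall_mem_Ico ham hf, integral_eq_of_forall_mem_Ico₂ hmm' hm'b hf' hf'',
    add_assoc]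

end PiecewiseConstant

section Mesh

variable {L v : ℤ → ℝ} {f : ℝ → ℝ} {j : ℤ} {s : ℝ}

theorem forall_mem_Ico_of_subset_cell (hf : ∀ j : ℤ, ∀ y ∈ Ico (L j) (L (j + 1)), f y = v j)
    {i : ℤ} {a b : ℝ} (ha : L i ≤ a) (hb : b ≤ L (i + 1)) : ∀ y ∈ Ico a b, f y = v i :=
  fun y hy => hf i y (Ico_subset_Ico ha hb hy)

theorem integral_cell_comp_sub_of_shift_into_pred
    (hf : ∀ j : ℤ, ∀ y ∈ Ico (L j) (L (j + 1)), f y = v j)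
    (hj : L j ≤ L (j + 1)) (hlo : L (j - 1) ≤ L j - s) (hhi : L (j + 1) - s ≤ L j) :
    ∫ y in L j..L (j + 1), f (y - s) = v (j - 1) * (L (j + 1) - L j) := by
  rw [integral_comp_sub_right, integral_eq_of_forall_mem_Ico (by linarith)
    (forall_mem_Ico_of_subset_cell hf hlo (by rwa [sub_add_cancel]))]
  ring

theorem integral_cell_comp_sub_upwind
    (hf : ∀ j : ℤ, ∀ y ∈ Ico (L j) (L (j + 1)), f y = v j)
    (hs : 0 ≤ s) (hsj : s ≤ L (j + 1) - L j) (hlo : L (j - 1) ≤ L j - s) :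
    ∫ y in L j..L (j + 1), f (y - s) = v (j - 1) * s + v j * (L (j + 1) - L j - s) := by
  rw [integral_comp_sub_right, integral_eq_of_forall_mem_Ico₂ (m := L j) (by linarith)
    (by linarith) (forall_mem_Ico_of_subset_cell hf hlo (by rw [sub_add_cancel]))
    (forall_mem_Ico_of_subset_cell hf le_rfl (by linarith))]
  ring

theorem integral_cell_comp_sub_upwind₂
    (hf : ∀ j : ℤ, ∀ y ∈ Ico (L j) (L (j + 1)), f y = v j)
    (hsj : s ≤ L (j + 1) - L j) (hpred : L (j - 1) ≤ L j) (hhi : L j - s ≤ L (j - 1))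
    (hlo : L (j - 2) ≤ L j - s) :
    ∫ y in L j..L (j + 1), f (y - s) = v (j - 2) * (L (j - 1) - (L j - s))
      + v (j - 1) * (L j - L (j - 1)) + v j * (L (j + 1) - s - L j) := by
  rw [integral_comp_sub_right, integral_eq_of_forall_mem_Ico₃ hhi hpred (by linarith)
    (forall_mem_Ico_of_subset_cell hf hlo (by rw [show j - 2 + 1 = j - 1 by ring]))
    (forall_mem_Ico_of_subset_cell hf le_rfl (by rw [sub_add_cancel]))
    (forall_mem_Ico_of_subset_cell hf le_rfl (by linarith))]

end Mesh

def cutCellMesh (h α : ℝ) (j : ℤ) : ℝ :=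
  if j ≤ 0 then (j : ℝ) * h else if j = 1 then α * h else ((j : ℝ) - 1) * h

section CutCellMesh

variable {h α : ℝ} {j : ℤ}

theorem cutCellMesh_succ_sub (hj0 : j ≠ 0) (hj1 : j ≠ 1) :
    cutCellMesh h α (j + 1) - cutCellMesh h α j = h := by
  rcases lt_or_gt_of_ne hj0 with hj | hj
  · simp only [cutCellMesh, if_pos (by omega : j + 1 ≤ 0), if_pos hj.le]
    push_cast; ring
  · simp only [cutCellMesh, if_neg (by omega : ¬ j + 1 ≤ 0), if_neg (by omega : j + 1 ≠ 1),
      if_neg (by omega : ¬ j ≤ 0), if_neg hj1]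
    push_cast; ring

theorem sub_mul_le_cutCellMesh_sub_pred (hh : 0 ≤ h) (hα : 0 ≤ α) (hj1 : j ≠ 1) :
    (1 - α) * h ≤ cutCellMesh h α j - cutCellMesh h α (j - 1) := by
  rcases eq_or_ne j 2 with rfl | hj2
  · norm_num [cutCellMesh]; linarith
  have := cutCellMesh_succ_sub (h := h) (α := α) (j := j - 1) (by omega) (by omega)
  rw [sub_add_cancel] at this
  nlinarith

end CutCellMesh

/-- With `η = 1 − α/λ`, one DoD step applied to piecewise constant data equals the L²
projection (cell averaging) of the exactly advected solution `f(· − λh)` on every cell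
of the cut cell mesh; in particular the scheme is exact on the small cell `k1` (cell 0).
Cells are indexed by `ℤ` with left endpoints `L`: cell 0 is `k1 = [0, αh]`,
cell 1 is `k2 = [αh, h]`, and all other cells have length `h`. -/
theorem dod_equals_projection_of_advected (h α lam η : ℝ)
    (L : ℤ → ℝ) (v w : ℤ → ℝ) (f : ℝ → ℝ)
    (hh : 0 < h) (hα0 : 0 < α) (hcut : α < lam) (hlam : lam ≤ 1/2)
    (hη : η = 1 - α / lam)
    (hL : ∀ j : ℤ, L j = if j ≤ 0 then (j : ℝ) * h
      else if j = 1 then α * h else ((j : ℝ) - 1) * h)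
    (hf : ∀ j : ℤ, ∀ y ∈ Set.Ico (L j) (L (j + 1)), f y = v j)
    (hstd : ∀ j : ℤ, j ≠ 0 → j ≠ 1 → w j = v j - lam * (v j - v (j - 1)))
    (hk1 : w 0 = v 0 - (lam / α) * (1 - η) * (v 0 - v (-1)))
    (hk2 : w 1 = v 1 - (lam / (1 - α)) * (v 1 - v 0)
        - (lam / (1 - α)) * η * (v 0 - v (-1))) :
    ∀ j : ℤ, w j = (1 / (L (j + 1) - L j)) * ∫ y in (L j)..(L (j + 1)), f (y - lam * h) := by
  intro j
  obtain rfl : L = cutCellMesh h α := funext hL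
  have hlam0 : 0 < lam := hα0.trans hcut
  rcases eq_or_ne j 0 with rfl | hj0
  · rw [integral_cell_comp_sub_of_shift_into_pred hf ?_ ?_ ?_, hk1, hη]
    all_goals norm_num [cutCellMesh]
    · field_simp
      ring
    all_goals nlinarith
  rcases eq_or_ne j 1 with rfl | hj1
  · have hα1 : 1 - α ≠ 0 := ne_of_gt (by linarith)
    rw [integral_cell_comp_sub_upwind₂ hf ?_ ?_ ?_ ?_, hk2, hη]
    all_goals norm_num [cutCellMesh]
    · field_simp
      ring
    all_goals nlinarith
  · have hcell := cutCellMesh_succ_sub (h := h) (α := α) hj0 hj1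
    have hpred := sub_mul_le_cutCellMesh_sub_pred hh.le hα0.le hj1
    rw [integral_cell_comp_sub_upwind hf (by positivity) (by nlinarith) (by nlinarith), hcell,
      hstd j hj0 hj1]
    field_simp
    ring
end
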